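/- arXiv:2308.06802 — 6 statements merged into one kernel-verified Lean document; each statement's English description precedes it below -/
import Mathlib

section
/- Let $A = \{a_1, \ldots, a_k\}$ and $B = \{b_1, \ldots, b_k\}$ be disjoint $k$-subsets of $\mathbb{F}_q$, and let $l < k$. Suppose there is an invertible $l \times l$ matrix $\mathbf{T}$ with $\mathbf{B}^{(l)} = \mathbf{T}\mathbf{A}^{(l)}$ (Vandermonde matrices of height $l$). Then for any $l$-subset $C = \{c_1, \ldots, c_l\} \subseteq \mathbb{F}_q$ disjoint from $A \cup B$, there exists a $k \times k$ matrix $\mathbf{M}$ over $\mathbb{F}_q$ such that: (1) for every $1 \le i \le k$, $\mathbf{M} \cdot (1, b_i, \ldots, b_i^{k-1})^T = \theta_i (1, a_i, \ldots, a_i^{k-1})^T$, where $\theta_i = h_{B \cup C \setminus \{b_i\}}(b_i) / h_{A \cup C \setminus \{a_i\}}(a_i)$; and (2) for every $1 \le j \le l$, $\mathbf{M} \cdot (1, c_j, \ldots, c_j^{k-1})^T$ lies in the span of $\{(1, c_i, \ldots, c_i^{k-1})^T : 1 \le i \le l\}$. -/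
open Polynomial Finset

lemma sumA {F : Type*} [Field F] {ι : Type*} [Fintype ι] [DecidableEq ι]
    (x : ι → F) (hx : Function.Injective x) (s : ℕ) (hs : s + 1 < Fintype.card ι) :
    ∑ n, x n ^ s * (∏ m ∈ Finset.univ.erase n, (x n - x m))⁻¹ = 0 := by
  have hinj : Set.InjOn x (Finset.univ : Finset ι) := hx.injOn
  have hdeg : ((X : F[X]) ^ s).degree < ((Finset.univ : Finset ι).card : ℕ) := by
    rw [Polynomial.degree_X_pow, Finset.card_univ]
    exact_mod_cast (by omega : s < Fintype.card ι)
  have h := Lagrange.eq_interpolate hinj hdeg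
  have h2 := congrArg (fun P => Polynomial.coeff P (Fintype.card ι - 1)) h
  simp only [Lagrange.interpolate_apply, Polynomial.finset_sum_coeff,
    Polynomial.coeff_C_mul, Polynomial.coeff_X_pow] at h2
  rw [if_neg (by omega)] at h2
  have hb : ∀ n : ι, (Lagrange.basis Finset.univ x n).coeff (Fintype.card ι - 1)
      = Lagrange.nodalWeight Finset.univ x n := by
    intro n
    rw [Lagrange.basis_eq_prod_sub_inv_mul_nodal_div (Finset.mem_univ n),
      ← Lagrange.nodal_erase_eq_nodal_div (Finset.mem_univ n), Polynomial.coeff_C_mul]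
    have hm : (Lagrange.nodal (Finset.univ.erase n) x).Monic := Lagrange.nodal_monic
    have hd : (Lagrange.nodal (Finset.univ.erase n) x).natDegree = Fintype.card ι - 1 := by
      rw [Lagrange.natDegree_nodal, Finset.card_erase_of_mem (Finset.mem_univ n),
        Finset.card_univ]
    rw [← hd, hm.coeff_natDegree, mul_one]
  simp only [hb, Polynomial.eval_pow, Polynomial.eval_X] at h2
  rw [show (∑ n, x n ^ s * (∏ m ∈ Finset.univ.erase n, (x n - x m))⁻¹)
      = ∑ n, x n ^ s * Lagrange.nodalWeight Finset.univ x n from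
    Finset.sum_congr rfl fun n _ => by rw [Lagrange.nodalWeight, Finset.prod_inv_distrib]]
  exact h2.symm

lemma sumB {F : Type*} [Field F] {ι : Type*} [Fintype ι] [DecidableEq ι]
    (x : ι → F) (hx : Function.Injective x) (y : F) (hy : ∀ n, y ≠ x n)
    (t : ℕ) (ht : t < Fintype.card ι) :
    ∑ n, (∏ m, (y - x m)) * (∏ m ∈ Finset.univ.erase n, (x n - x m))⁻¹ * (y - x n)⁻¹ * x n ^ t
      = y ^ t := by
  have hinj : Set.InjOn x (Finset.univ : Finset ι) := hx.injOn
  have hdeg : ((X : F[X]) ^ t).degree < ((Finset.univ : Finset ι).card : ℕ) := by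
    rw [Polynomial.degree_X_pow, Finset.card_univ]; exact_mod_cast ht
  have h := Lagrange.eq_interpolate hinj hdeg
  have h2 := congrArg (Polynomial.eval y) h
  rw [Lagrange.eval_interpolate_not_at_node _ (fun n _ => hy n)] at h2
  simp only [Polynomial.eval_pow, Polynomial.eval_X, Lagrange.eval_nodal] at h2
  rw [Finset.mul_sum] at h2
  rw [show (∑ n, (∏ m, (y - x m)) * (∏ m ∈ Finset.univ.erase n, (x n - x m))⁻¹ * (y - x n)⁻¹
        * x n ^ t)
      = ∑ n, (∏ m, (y - x m)) * (Lagrange.nodalWeight Finset.univ x n * (y - x n)⁻¹ * x n ^ t)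
      from Finset.sum_congr rfl fun n _ => by
        rw [Lagrange.nodalWeight, Finset.prod_inv_distrib]; ring]
  exact h2.symm

lemma prodInl {F : Type*} [CommRing F] {k l : ℕ} (f : Fin k ⊕ Fin l → F) (i : Fin k) :
    ∏ m ∈ (Finset.univ : Finset (Fin k ⊕ Fin l)).erase (Sum.inl i), f m
      = (∏ i' ∈ Finset.univ.erase i, f (Sum.inl i')) * ∏ m : Fin l, f (Sum.inr m) := by
  rw [show (Finset.univ : Finset (Fin k ⊕ Fin l)).erase (Sum.inl i)
      = (Finset.univ.erase i).disjSum Finset.univ by ext m; cases m <;> simp [Sum.inl.injEq]]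
  rw [Finset.prod_disjSum]

lemma prodInr {F : Type*} [CommRing F] {k l : ℕ} (f : Fin k ⊕ Fin l → F) (j : Fin l) :
    ∏ m ∈ (Finset.univ : Finset (Fin k ⊕ Fin l)).erase (Sum.inr j), f m
      = (∏ i : Fin k, f (Sum.inl i)) * ∏ m ∈ Finset.univ.erase j, f (Sum.inr m) := by
  rw [show (Finset.univ : Finset (Fin k ⊕ Fin l)).erase (Sum.inr j)
      = (Finset.univ : Finset (Fin k)).disjSum (Finset.univ.erase j) by
    ext m; cases m <;> simp [Sum.inr.injEq]]
  rw [Finset.prod_disjSum]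

/-- Lemma 4 (Lemma `lem2-1`): if the height-`l` Vandermonde matrices of the disjoint
`k`-sets `A` and `B` are related by an invertible matrix `T`, then for any `l`-set `C`
disjoint from `A ∪ B` there is a `k × k` matrix `M` with
`M · (1, bᵢ, …, bᵢ^(k-1))ᵀ = θᵢ (1, aᵢ, …, aᵢ^(k-1))ᵀ` for
`θᵢ = h_{B∪C∖{bᵢ}}(bᵢ) / h_{A∪C∖{aᵢ}}(aᵢ)`, and
`M · (1, cⱼ, …, cⱼ^(k-1))ᵀ` in the span of the moment vectors of the `cᵢ`. -/
theorem stmt_5 (F : Type*) [Field F] [Fintype F] (k l : ℕ) (hk : 2 ≤ k) (hl : l < k)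
    (a b : Fin k → F) (c : Fin l → F)
    (hainj : Function.Injective a) (hbinj : Function.Injective b)
    (hcinj : Function.Injective c)
    (hab : ∀ i j, a i ≠ b j) (hac : ∀ i j, a i ≠ c j) (hbc : ∀ i j, b i ≠ c j)
    (T : Matrix (Fin l) (Fin l) F) (hT : IsUnit T)
    (hTA : (Matrix.of fun (i : Fin l) (j : Fin k) => (b j) ^ (i : ℕ)) =
      T * (Matrix.of fun (i : Fin l) (j : Fin k) => (a j) ^ (i : ℕ))) :
    ∃ M : Matrix (Fin k) (Fin k) F,
      (∀ i : Fin k,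
        M.mulVec (fun t : Fin k => (b i) ^ (t : ℕ)) =
          (((∏ j ∈ Finset.univ.erase i, (b i - b j)) * ∏ j : Fin l, (b i - c j)) /
            ((∏ j ∈ Finset.univ.erase i, (a i - a j)) * ∏ j : Fin l, (a i - c j))) •
            (fun t : Fin k => (a i) ^ (t : ℕ))) ∧
      (∀ j : Fin l,
        M.mulVec (fun t : Fin k => (c j) ^ (t : ℕ)) ∈
          Submodule.span F
            (Set.range fun i : Fin l => fun t : Fin k => (c i) ^ (t : ℕ))) := by
  classical
  set θ : Fin k → F := fun i =>
    ((∏ j ∈ Finset.univ.erase i, (b i - b j)) * ∏ j : Fin l, (b i - c j)) /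
      ((∏ j ∈ Finset.univ.erase i, (a i - a j)) * ∏ j : Fin l, (a i - c j)) with hθ
  set Va : Matrix (Fin k) (Fin k) F := Matrix.transpose (Matrix.vandermonde a) with hVa
  set Vb : Matrix (Fin k) (Fin k) F := Matrix.transpose (Matrix.vandermonde b) with hVb
  have hdb : IsUnit Vb.det := by
    rw [hVb, Matrix.det_transpose]
    exact Ne.isUnit (Matrix.det_vandermonde_ne_zero_iff.mpr hbinj)
  refine ⟨Va * Matrix.diagonal θ * Vb⁻¹, ?_, ?_⟩
  · intro i
    have h1 : Vb.mulVec (Pi.single i 1) = fun t : Fin k => b i ^ (t : ℕ) := by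
      rw [Matrix.mulVec_single_one]
      rfl
    rw [← h1, Matrix.mulVec_mulVec, Matrix.mul_assoc (Va * Matrix.diagonal θ),
      Matrix.nonsing_inv_mul Vb hdb, Matrix.mul_one]
    funext t
    show ((Va * Matrix.diagonal θ).mulVec (Pi.single i 1)) t = θ i * a i ^ (t : ℕ)
    rw [Matrix.mulVec_single]
    rw [Pi.smul_apply, Matrix.col_apply, op_smul_eq_mul]
    rw [mul_one, Matrix.mul_diagonal]
    show Matrix.vandermonde a i t * θ i = θ i * a i ^ (t : ℕ)
    rw [Matrix.vandermonde_apply, mul_comm]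
  · intro j
    set y := c j with hy
    -- the coordinates of the moment vector of y in the basis of moment vectors of b
    set lam : Fin k → F := fun n =>
      (∏ m, (y - b m)) * (∏ m ∈ Finset.univ.erase n, (b n - b m))⁻¹ * (y - b n)⁻¹ with hlam
    have hyb : ∀ n, y ≠ b n := fun n => (hbc n j).symm
    have hVbl : Vb.mulVec lam = (fun t : Fin k => y ^ (t : ℕ)) := by
      funext t
      have hs := sumB b hbinj y hyb t (by rw [Fintype.card_fin]; exact t.isLt)
      rw [← hs]
      simp only [Matrix.mulVec, dotProduct, hVb, Matrix.transpose_apply,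
        Matrix.vandermonde]
      exact Finset.sum_congr rfl fun n _ => by dsimp; ring
    have hinvb : Vb⁻¹.mulVec (fun t : Fin k => y ^ (t : ℕ)) = lam := by
      rw [← hVbl, Matrix.mulVec_mulVec, Matrix.nonsing_inv_mul Vb hdb, Matrix.one_mulVec]
    have hM : (Va * Matrix.diagonal θ * Vb⁻¹).mulVec (fun t : Fin k => (c j) ^ (t : ℕ))
        = (Va * Matrix.diagonal θ).mulVec lam := by
      rw [← Matrix.mulVec_mulVec, hinvb]
    -- coefficient vectors
    set Ppoly : Polynomial F := ∏ m ∈ Finset.univ.erase j, (X - C (c m)) with hPpoly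
    set E : F := ∏ m, (y - b m) with hE
    set p : Fin l → F := fun s => (-E) * Ppoly.coeff s with hp
    set q : Fin l → F := Matrix.vecMul p T with hq
    have htrans : ∀ i : Fin k,
        (∑ s : Fin l, p s * (b i) ^ (s : ℕ)) = ∑ s : Fin l, q s * (a i) ^ (s : ℕ) := by
      intro i
      have h1 : (∑ s : Fin l, p s * (b i) ^ (s : ℕ))
          = Matrix.vecMul p (Matrix.of fun (s : Fin l) (i : Fin k) => (b i) ^ (s : ℕ)) i := by
        simp [Matrix.vecMul, dotProduct]
      rw [h1, hTA, ← Matrix.vecMul_vecMul]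
      simp [Matrix.vecMul, dotProduct, hq]
    have hdegP : Ppoly.natDegree < l := by
      have h1 : Ppoly.natDegree = (Finset.univ.erase j).card := by
        rw [hPpoly, Polynomial.natDegree_prod_of_monic _ _ (fun m _ => monic_X_sub_C (c m))]
        simp [Polynomial.natDegree_X_sub_C]
      rw [h1, Finset.card_erase_of_mem (Finset.mem_univ j), Finset.card_univ, Fintype.card_fin]
      have := j.pos
      omega
    have hpeval : ∀ z : F,
        (∑ s : Fin l, p s * z ^ (s : ℕ)) = -E * ∏ m ∈ Finset.univ.erase j, (z - c m) := by
      intro z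
      have h1 : Ppoly.eval z = ∏ m ∈ Finset.univ.erase j, (z - c m) := by
        rw [hPpoly, Polynomial.eval_prod]
        exact Finset.prod_congr rfl fun m _ => by simp
      have h2 : Ppoly.eval z = ∑ s ∈ Finset.range l, Ppoly.coeff s * z ^ s :=
        Polynomial.eval_eq_sum_range' hdegP z
      rw [← h1, h2, ← Fin.sum_univ_eq_sum_range (fun s => Ppoly.coeff s * z ^ s) l,
        Finset.mul_sum]
      exact Finset.sum_congr rfl fun s _ => by rw [hp]; ring
    -- combined node set
    set u : Fin k ⊕ Fin l → F := Sum.elim a c with hu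
    have huinj : Function.Injective u := by
      rintro (m | m) (n | n) h <;> simp only [hu, Sum.elim_inl, Sum.elim_inr] at h
      · exact congrArg Sum.inl (hainj h)
      · exact absurd h (hac m n)
      · exact absurd h.symm (hac n m)
      · exact congrArg Sum.inr (hcinj h)
    have hcomb : ∀ t : ℕ, t < k →
        ∑ n : Fin k ⊕ Fin l, (∑ s : Fin l, q s * u n ^ (s : ℕ)) * u n ^ t *
          (∏ m ∈ Finset.univ.erase n, (u n - u m))⁻¹ = 0 := by
      intro t ht
      have h1 : ∀ n : Fin k ⊕ Fin l, (∑ s : Fin l, q s * u n ^ (s : ℕ)) * u n ^ t *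
          (∏ m ∈ Finset.univ.erase n, (u n - u m))⁻¹
          = ∑ s : Fin l, q s *
              (u n ^ ((s : ℕ) + t) * (∏ m ∈ Finset.univ.erase n, (u n - u m))⁻¹) := by
        intro n
        rw [Finset.sum_mul, Finset.sum_mul]
        exact Finset.sum_congr rfl fun s _ => by rw [pow_add]; ring
      simp only [h1]
      rw [Finset.sum_comm]
      refine Finset.sum_eq_zero fun s _ => ?_
      rw [← Finset.mul_sum]
      have hsl := s.isLt
      have h2 : ∑ n : Fin k ⊕ Fin l,
          u n ^ ((s : ℕ) + t) * (∏ m ∈ Finset.univ.erase n, (u n - u m))⁻¹ = 0 :=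
        sumA u huinj _ (by rw [Fintype.card_sum, Fintype.card_fin, Fintype.card_fin]; omega)
      rw [h2, mul_zero]
    -- nonvanishing facts
    have hPA : ∀ i : Fin k, (∏ m ∈ Finset.univ.erase i, (a i - a m)) ≠ 0 := fun i =>
      Finset.prod_ne_zero_iff.mpr fun m hm =>
        sub_ne_zero_of_ne fun h => (Finset.mem_erase.mp hm).1 (hainj h).symm
    have hPB : ∀ i : Fin k, (∏ m ∈ Finset.univ.erase i, (b i - b m)) ≠ 0 := fun i =>
      Finset.prod_ne_zero_iff.mpr fun m hm =>
        sub_ne_zero_of_ne fun h => (Finset.mem_erase.mp hm).1 (hbinj h).symm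
    have hPAC : ∀ i : Fin k, (∏ m : Fin l, (a i - c m)) ≠ 0 := fun i =>
      Finset.prod_ne_zero_iff.mpr fun m _ => sub_ne_zero_of_ne (hac i m)
    have hdne : ∀ i : Fin k, y - b i ≠ 0 := fun i => sub_ne_zero_of_ne (hyb i)
    -- value of θ i * lam i
    have hvalA : ∀ i : Fin k, θ i * lam i
        = (∑ s : Fin l, q s * u (Sum.inl i) ^ (s : ℕ)) *
          (∏ m ∈ Finset.univ.erase (Sum.inl i), (u (Sum.inl i) - u m))⁻¹ := by
      intro i
      rw [prodInl (fun m => u (Sum.inl i) - u m) i]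
      simp only [hu, Sum.elim_inl, Sum.elim_inr]
      rw [← htrans i, hpeval (b i)]
      have e1 : (∏ m : Fin l, (b i - c m))
          = (b i - y) * ∏ m ∈ Finset.univ.erase j, (b i - c m) := by
        rw [hy]; exact (Finset.mul_prod_erase _ _ (Finset.mem_univ j)).symm
      have e2 : E = (y - b i) * ∏ m ∈ Finset.univ.erase i, (y - b m) :=
        (Finset.mul_prod_erase _ _ (Finset.mem_univ i)).symm
      simp only [hθ, hlam]
      rw [e1, e2]
      field_simp [hPA i, hPAC i, hPB i, hdne i]
      ring
    -- conclude
    rw [hM]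
    have hw : (Va * Matrix.diagonal θ).mulVec lam
        = ∑ m : Fin l, (-((∑ s : Fin l, q s * u (Sum.inr m) ^ (s : ℕ)) *
            (∏ m' ∈ Finset.univ.erase (Sum.inr m), (u (Sum.inr m) - u m'))⁻¹))
          • (fun t : Fin k => (c m) ^ (t : ℕ)) := by
      funext t
      have hc := hcomb (t : ℕ) t.isLt
      rw [Fintype.sum_sum_type] at hc
      have hLHS : ((Va * Matrix.diagonal θ).mulVec lam) t
          = ∑ i : Fin k, (∑ s : Fin l, q s * u (Sum.inl i) ^ (s : ℕ)) *
              u (Sum.inl i) ^ (t : ℕ) *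
              (∏ m' ∈ Finset.univ.erase (Sum.inl i), (u (Sum.inl i) - u m'))⁻¹ := by
        simp only [Matrix.mulVec, dotProduct, Matrix.mul_diagonal]
        refine Finset.sum_congr rfl fun n _ => ?_
        have hVatn : Va t n = a n ^ (t : ℕ) := by
          rw [hVa, Matrix.transpose_apply, Matrix.vandermonde_apply]
        have hun : u (Sum.inl n) = a n := by rw [hu, Sum.elim_inl]
        rw [hVatn, hun]
        calc a n ^ (t : ℕ) * θ n * lam n = (θ n * lam n) * a n ^ (t : ℕ) := by ring
          _ = _ := by rw [hvalA n, hun]; ring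
      rw [hLHS, Finset.sum_apply]
      simp only [Pi.smul_apply, smul_eq_mul]
      have hc' := eq_neg_of_add_eq_zero_left hc
      rw [hc', neg_eq_iff_eq_neg, ← Finset.sum_neg_distrib]
      refine Finset.sum_congr rfl fun m _ => ?_
      have hum : u (Sum.inr m) = c m := by rw [hu, Sum.elim_inr]
      rw [hum]
      ring
    rw [hw]
    exact Submodule.sum_mem _ fun m _ =>
      Submodule.smul_mem _ _ (Submodule.subset_span ⟨m, rfl⟩)
end

section
/- Let $k, r \geq 1$, let $A_1, \ldots, A_k$ be pairwise disjoint $(r+1)$-subsets of $\mathbb{F}_q$ with $A_i = \{a_{i,1}, \ldots, a_{i,r+1}\}$, and let $g \in \mathbb{F}_q[x]$ be a polynomial of degree $r+1$ that is constant on each $A_i$, taking pairwise distinct values $g_1, \ldots, g_k$. For $(i,j) \in [k] \times [r+1]$, define $\mathbf{a}_{i,j} = (a_{i,j}^s g^t(a_{i,j}))_{(s,t) \in [0,r-1] \times [0,k-1]} \in \mathbb{F}_q^{kr}$. Then the $kr$ vectors $\{\mathbf{a}_{i,j} : 1 \le i \le k, 1 \le j \le r\}$ are linearly independent over $\mathbb{F}_q$.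 -/
/-- With pairwise disjoint `(r+1)`-sets `Aᵢ = {a_{i,1}, …, a_{i,r+1}}`, a degree-`(r+1)`
polynomial `g` constant on each `Aᵢ` with pairwise distinct values `gᵢ`, the `kr`
evaluation vectors `a_{i,j} = (a_{i,j}^s g(a_{i,j})^t)` for `1 ≤ i ≤ k`, `1 ≤ j ≤ r`
are linearly independent. -/
theorem stmt_9 (F : Type*) [Field F] [Fintype F] (k r : ℕ) (hk : 0 < k) (hr : 0 < r)
    (a : Fin k → Fin (r + 1) → F)
    (hdist : Function.Injective fun p : Fin k × Fin (r + 1) => a p.1 p.2)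
    (g : Polynomial F) (hdeg : g.natDegree = r + 1)
    (gv : Fin k → F) (hconst : ∀ i j, g.eval (a i j) = gv i)
    (hgv : Function.Injective gv) :
    LinearIndependent F
      (fun p : Fin k × Fin r => fun q : Fin r × Fin k =>
        (a p.1 p.2.castSucc) ^ (q.1 : ℕ) * (g.eval (a p.1 p.2.castSucc)) ^ (q.2 : ℕ)) := by
  -- Square matrix indexed by (Fin k × Fin r): M p (t,s) = a_{p}^s * gv_{p.1}^t
  set M : Matrix (Fin k × Fin r) (Fin k × Fin r) F :=
    fun p q => (a p.1 p.2.castSucc) ^ (q.2 : ℕ) * gv p.1 ^ (q.1 : ℕ) with hM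
  have hunit : IsUnit M := by
    rw [← Matrix.mulVec_injective_iff_isUnit, ← Matrix.coe_mulVecLin,
      ← LinearMap.ker_eq_bot, LinearMap.ker_eq_bot']
    intro c hc0
    have hc : M.mulVec c = 0 := hc0
    funext s'
    show c s' = 0
    -- first: for each i and each s, ∑ t, c (t,s) * gv i ^ t = 0
    have h1 : ∀ (i : Fin k) (s : Fin r), ∑ t : Fin k, c (t, s) * gv i ^ (t : ℕ) = 0 := by
      intro i
      have := Matrix.eq_zero_of_forall_index_sum_mul_pow_eq_zero
        (R := F) (n := r) (f := fun j : Fin r => a i j.castSucc)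
        (v := fun s : Fin r => ∑ t : Fin k, c (t, s) * gv i ^ (t : ℕ))
        (fun j₁ j₂ h => by
          have := hdist (a₁ := (i, (j₁ : Fin r).castSucc)) (a₂ := (i, (j₂ : Fin r).castSucc)) h
          exact Fin.castSucc_injective _ (congrArg Prod.snd this))
        ?_
      · intro s; exact congrFun this s
      · intro j
        have hj := congrFun hc (i, j)
        simp only [Matrix.mulVec, dotProduct, hM, Pi.zero_apply] at hj
        rw [← hj, Fintype.sum_prod_type]
        rw [Finset.sum_comm]
        congr 1; funext s
        rw [Finset.sum_mul]
        congr 1; funext t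
        ring
    have h2 := Matrix.eq_zero_of_forall_index_sum_mul_pow_eq_zero
      (R := F) (n := k) (f := gv) (v := fun t : Fin k => c (t, s'.2)) hgv
      (fun i => h1 i s'.2)
    exact congrFun h2 s'.1
  have hrows : LinearIndependent F (fun p => M p) :=
    Matrix.linearIndependent_rows_iff_isUnit.2 hunit
  have hmap := hrows.map' (LinearEquiv.funCongrLeft F F
      (Equiv.prodComm (Fin r) (Fin k))).toLinearMap
      (LinearEquiv.funCongrLeft F F (Equiv.prodComm (Fin r) (Fin k))).ker
  convert hmap using 1
  funext p
  funext q
  simp [hM, LinearEquiv.funCongrLeft, hconst, mul_comm]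
  all_goals rfl
end

section
/- With the setup of pairwise disjoint $(r+1)$-sets $A_1, \ldots, A_k \subseteq \mathbb{F}_q$, a degree-$(r+1)$ polynomial $g$ constant on each $A_i$ with distinct values $g_i = g(A_i)$, $\tilde{A}_i = A_i \setminus \{a_{i,r+1}\}$, and $\mathbf{a}_{i,j} = (a_{i,j}^s g^t(a_{i,j}))_{(s,t)\in[0,r-1]\times[0,k-1]}$: for any $c \in \mathbb{F}_q$, the vector $\mathbf{c} = (c^s g^t(c))_{(s,t)\in[0,r-1]\times[0,k-1]}$ satisfies $\mathbf{c} = \sum_{(i,j) \in [k]\times[r]} \frac{h_{G\setminus\{g_i\}}(g(c))}{h_{G\setminus\{g_i\}}(g_i)} \cdot \frac{h_{\tilde{A}_i\setminus\{a_{i,j}\}}(c)}{h_{\tilde{A}_i\setminus\{a_{i,j}\}}(a_{i,j})} \mathbf{a}_{i,j}$, where $G = \{g_1,\ldots,g_k\}$ and $h_S(x) = \prod_{s\in S}(x-s)$. -/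
/-!
Both levels are Lagrange interpolation at distinct nodes, which is exact on polynomials of degree
less than the number of nodes. Interpolating `Y ^ t` at the nodes `gᵢ` (with `t < k`) and then
`X ^ s` at the nodes `a_{i,j}`, `j ∈ [r]` (with `s < r`), and using `g(a_{i,j}) = gᵢ`, turns
`c ^ s * g(c) ^ t` into the stated double sum.
-/

open Finset Polynomial

theorem Lagrange.eval_basis_eq_prod_div {F ι : Type*} [Field F] [DecidableEq ι] (s : Finset ι)
    (v : ι → F) (i : ι) (x : F) :
    (Lagrange.basis s v i).eval x =
      (∏ j ∈ s.erase i, (x - v j)) / ∏ j ∈ s.erase i, (v i - v j) := by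
  simp only [Lagrange.basis, Lagrange.basisDivisor, eval_prod, eval_mul, eval_C, eval_sub, eval_X,
    div_eq_mul_inv, ← prod_inv_distrib, ← prod_mul_distrib, mul_comm]

section Interpolation

variable {F ι : Type*} [Field F] [Fintype ι] [DecidableEq ι] {v : ι → F}

theorem Polynomial.sum_prod_div_mul_eval_eq_eval (hv : Function.Injective v) {p : F[X]}
    (hp : p.degree < Fintype.card ι) (x : F) :
    ∑ j, (∏ j' ∈ univ.erase j, (x - v j')) / (∏ j' ∈ univ.erase j, (v j - v j')) * p.eval (v j) =
      p.eval x := by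
  conv_rhs => rw [Lagrange.eq_interpolate hv.injOn hp]
  simp only [Lagrange.interpolate_apply, eval_finsetSum, eval_mul, eval_C,
    Lagrange.eval_basis_eq_prod_div, mul_comm]

theorem sum_prod_div_mul_pow_eq_pow (hv : Function.Injective v) {m : ℕ}
    (hm : m < Fintype.card ι) (x : F) :
    ∑ j, (∏ j' ∈ univ.erase j, (x - v j')) / (∏ j' ∈ univ.erase j, (v j - v j')) * v j ^ m =
      x ^ m := by
  simpa using sum_prod_div_mul_eval_eq_eval hv (p := X ^ m) (by simpa using hm) x

end Interpolation

theorem stmt_10_general (F : Type*) [Field F] (k r : ℕ)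
    (a : Fin k → Fin (r + 1) → F)
    (hdist : Function.Injective fun p : Fin k × Fin (r + 1) => a p.1 p.2)
    (g : Polynomial F)
    (gv : Fin k → F) (hconst : ∀ i j, g.eval (a i j) = gv i)
    (hgv : Function.Injective gv) (c : F) :
    ∀ s : Fin r, ∀ t : Fin k,
      c ^ (s : ℕ) * (g.eval c) ^ (t : ℕ) =
        ∑ i : Fin k, ∑ j : Fin r,
          ((∏ i' ∈ Finset.univ.erase i, (g.eval c - gv i')) /
              (∏ i' ∈ Finset.univ.erase i, (gv i - gv i'))) *
            ((∏ j' ∈ Finset.univ.erase j, (c - a i j'.castSucc)) /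
              (∏ j' ∈ Finset.univ.erase j, (a i j.castSucc - a i j'.castSucc))) *
            ((a i j.castSucc) ^ (s : ℕ) * (g.eval (a i j.castSucc)) ^ (t : ℕ)) := by
  intro s t
  have hrow (i : Fin k) : Function.Injective fun j : Fin r => a i j.castSucc := fun x y h =>
    Fin.castSucc_injective r (Prod.ext_iff.1 (@hdist (i, x.castSucc) (i, y.castSucc) h)).2
  rw [mul_comm, ← sum_prod_div_mul_pow_eq_pow hgv (by simp) (g.eval c), sum_mul]
  refine sum_congr rfl fun i _ => ?_
  rw [← sum_prod_div_mul_pow_eq_pow (hrow i) (by simp) c, mul_sum]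
  refine sum_congr rfl fun j _ => ?_
  rw [hconst]
  ring

/-- Two-level Lagrange interpolation: for any `c ∈ F`, the vector
`(c^s g(c)^t)` is the explicit linear combination of the vectors
`(a_{i,j}^s g(a_{i,j})^t)`, `(i,j) ∈ [k] × [r]`, with coefficients
`(h_{G∖{gᵢ}}(g(c)) / h_{G∖{gᵢ}}(gᵢ)) · (h_{Ãᵢ∖{a_{i,j}}}(c) / h_{Ãᵢ∖{a_{i,j}}}(a_{i,j}))`. -/
theorem stmt_10 (F : Type*) [Field F] [Fintype F] (k r : ℕ) (hk : 0 < k) (hr : 0 < r)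
    (a : Fin k → Fin (r + 1) → F)
    (hdist : Function.Injective fun p : Fin k × Fin (r + 1) => a p.1 p.2)
    (g : Polynomial F) (hdeg : g.natDegree = r + 1)
    (gv : Fin k → F) (hconst : ∀ i j, g.eval (a i j) = gv i)
    (hgv : Function.Injective gv) (c : F) :
    ∀ s : Fin r, ∀ t : Fin k,
      c ^ (s : ℕ) * (g.eval c) ^ (t : ℕ) =
        ∑ i : Fin k, ∑ j : Fin r,
          ((∏ i' ∈ Finset.univ.erase i, (g.eval c - gv i')) /
              (∏ i' ∈ Finset.univ.erase i, (gv i - gv i'))) *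
            ((∏ j' ∈ Finset.univ.erase j, (c - a i j'.castSucc)) /
              (∏ j' ∈ Finset.univ.erase j, (a i j.castSucc - a i j'.castSucc))) *
            ((a i j.castSucc) ^ (s : ℕ) * (g.eval (a i j.castSucc)) ^ (t : ℕ)) :=
  stmt_10_general F k r a hdist g gv hconst hgv c
end

section
/- Let $\mathcal{C}$ be a linear code of length $n$ over $\mathbb{F}_q$ with locality $r$, meaning every coordinate $i \in [n]$ has a recovering set $I_i \subseteq [n]\setminus\{i\}$ of size at most $r$ such that the $i$-th symbol of every codeword is a function of the symbols indexed by $I_i$. Then for any subset $A \subseteq [n]$, there exists a subset $A' \subseteq A$ of size at least $\lceil |A|/(r+1) \rceil$ such that every $i \in A'$ has a recovering set $I_i$ with $I_i \cap A' = \emptyset$. -/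
def RecSet {F : Type*} [Field F] {n : ℕ} (C : Submodule F (Fin n → F))
    (I : Finset (Fin n)) (i : Fin n) : Prop :=
  ∀ c ∈ C, (∀ j ∈ I, c j = 0) → c i = 0

lemma myMinRecAux {F : Type*} [Field F] {n r : ℕ} (C : Submodule F (Fin n → F)) (i : Fin n) :
    ∀ I : Finset (Fin n), i ∉ I → I.card ≤ r → RecSet C I i →
    ∃ I', i ∉ I' ∧ I'.card ≤ r ∧ RecSet C I' i ∧ ∀ j ∈ I', ¬ RecSet C (I'.erase j) i := by
  intro I
  induction I using Finset.strongInductionOn with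
  | _ I ih =>
    intro hi hcard hrec
    by_cases h : ∃ j ∈ I, RecSet C (I.erase j) i
    · obtain ⟨j, hj, hrec'⟩ := h
      exact ih (I.erase j) (Finset.erase_ssubset hj)
        (fun h => hi (Finset.mem_of_mem_erase h))
        (le_trans (Finset.card_le_card (Finset.erase_subset _ _)) hcard) hrec'
    · exact ⟨I, hi, hcard, hrec, fun j hj hr => h ⟨j, hj, hr⟩⟩

lemma exists_circuit {F : Type*} [Field F] {n r : ℕ} (C : Submodule F (Fin n → F)) (i : Fin n)
    (h : ∃ I : Finset (Fin n), i ∉ I ∧ I.card ≤ r ∧ RecSet C I i) :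
    ∃ R : Finset (Fin n), i ∈ R ∧ R.card ≤ r + 1 ∧ ∀ j ∈ R, RecSet C (R.erase j) j := by
  obtain ⟨I₀, hi₀, hcard₀, hrec₀⟩ := h
  obtain ⟨I, hi, hcard, hrec, hmin⟩ := myMinRecAux C i I₀ hi₀ hcard₀ hrec₀
  refine ⟨insert i I, Finset.mem_insert_self _ _, ?_, ?_⟩
  · exact le_trans (Finset.card_insert_le _ _) (by omega)
  · intro j hj
    rcases Finset.mem_insert.mp hj with rfl | hjI
    · rwa [Finset.erase_insert hi]
    · have hij : i ≠ j := fun h => hi (h ▸ hjI)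
      have herase : (insert i I).erase j = insert i (I.erase j) := by
        rw [Finset.erase_insert_of_ne hij]
      rw [herase]
      by_contra hnot
      -- get a witness c₀ vanishing on insert i (I.erase j) with c₀ j ≠ 0
      unfold RecSet at hnot
      push_neg at hnot
      obtain ⟨c₀, hc₀C, hc₀van, hc₀j⟩ := hnot
      apply hmin j hjI
      intro c hcC hcvan
      -- d = c - (c j / c₀ j) • c₀ vanishes on I, so d i = 0, hence c i = 0
      have hc₀i : c₀ i = 0 := hc₀van i (Finset.mem_insert_self _ _)
      have hdC : c - (c j / c₀ j) • c₀ ∈ C := C.sub_mem hcC (C.smul_mem _ hc₀C)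
      have hdvan : ∀ k ∈ I, (c - (c j / c₀ j) • c₀) k = 0 := by
        intro k hk
        by_cases hkj : k = j
        · subst hkj
          simp only [Pi.sub_apply, Pi.smul_apply, smul_eq_mul]
          field_simp
          simp
        · have hk' : k ∈ I.erase j := Finset.mem_erase.mpr ⟨hkj, hk⟩
          have h1 : c k = 0 := hcvan k hk'
          have h2 : c₀ k = 0 := hc₀van k (Finset.mem_insert_of_mem hk')
          simp [h1, h2]
      have hdi := hrec _ hdC hdvan
      simp only [Pi.sub_apply, Pi.smul_apply, smul_eq_mul, hc₀i, mul_zero, sub_zero] at hdi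
      exact hdi

lemma key_lemma {F : Type*} [Field F] {n r : ℕ} (C : Submodule F (Fin n → F))
    (hR : ∀ i : Fin n, ∃ R : Finset (Fin n), i ∈ R ∧ R.card ≤ r + 1 ∧
      ∀ j ∈ R, RecSet C (R.erase j) j) :
    ∀ A : Finset (Fin n), ∃ A' U : Finset (Fin n), A' ⊆ A ∧ A ⊆ U ∧
      U.card ≤ (r + 1) * A'.card ∧
      ∀ b ∈ A', ∃ I : Finset (Fin n), I ⊆ U ∧ b ∉ I ∧ I.card ≤ r ∧ RecSet C I b ∧
        ∀ j ∈ I, j ∉ A' := by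
  intro A
  induction A using Finset.strongInductionOn with
  | _ A ih =>
    rcases A.eq_empty_or_nonempty with rfl | ⟨x, hx⟩
    · exact ⟨∅, ∅, Finset.Subset.refl _, Finset.Subset.refl _, by simp, by simp⟩
    · obtain ⟨R, hxR, hRcard, hRrec⟩ := hR x
      have hss : A \ R ⊂ A := by
        apply Finset.ssubset_iff_of_subset (Finset.sdiff_subset) |>.mpr
        exact ⟨x, hx, by simp [hxR]⟩
      obtain ⟨A'', U'', hA''sub, hBsub, hU''card, hcert⟩ := ih _ hss
      by_cases hcase : ((R ∩ A) \ U'').Nonempty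
      · obtain ⟨b, hb⟩ := hcase
        have hbR : b ∈ R := Finset.mem_of_mem_inter_left (Finset.mem_sdiff.mp hb).1
        have hbA : b ∈ A := Finset.mem_of_mem_inter_right (Finset.mem_sdiff.mp hb).1
        have hbU'' : b ∉ U'' := (Finset.mem_sdiff.mp hb).2
        have hbA'' : b ∉ A'' := by
          intro h
          have := hA''sub h
          exact (Finset.mem_sdiff.mp this).2 hbR
        have hdisj : ∀ a ∈ A'', a ∉ R := fun a ha => (Finset.mem_sdiff.mp (hA''sub ha)).2
        refine ⟨insert b A'', U'' ∪ R, ?_, ?_, ?_, ?_⟩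
        · intro a ha
          rcases Finset.mem_insert.mp ha with rfl | h
          · exact hbA
          · exact (Finset.mem_sdiff.mp (hA''sub h)).1
        · intro a ha
          by_cases haR : a ∈ R
          · exact Finset.mem_union_right _ haR
          · exact Finset.mem_union_left _ (hBsub (Finset.mem_sdiff.mpr ⟨ha, haR⟩))
        · calc (U'' ∪ R).card ≤ U''.card + R.card := Finset.card_union_le _ _
            _ ≤ (r + 1) * A''.card + (r + 1) := by omega
            _ = (r + 1) * (A''.card + 1) := by ring
            _ = (r + 1) * (insert b A'').card := by
                rw [Finset.card_insert_of_notMem hbA'']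
        · intro b' hb'
          rcases Finset.mem_insert.mp hb' with rfl | hb'A''
          · refine ⟨R.erase b', fun k hk => Finset.mem_union_right _ (Finset.erase_subset _ _ hk),
              Finset.notMem_erase _ _, ?_, hRrec b' hbR, ?_⟩
            · have := Finset.card_erase_of_mem hbR
              omega
            · intro j hj
              have hjR : j ∈ R := Finset.mem_of_mem_erase hj
              have hjb : j ≠ b' := Finset.ne_of_mem_erase hj
              intro hmem
              rcases Finset.mem_insert.mp hmem with rfl | h
              · exact hjb rfl
              · exact hdisj j h hjR
          · obtain ⟨I, hIU, hbI, hIcard, hIrec, hIA'⟩ := hcert b' hb'A''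
            refine ⟨I, fun k hk => Finset.mem_union_left _ (hIU hk), hbI, hIcard, hIrec, ?_⟩
            intro j hj hmem
            rcases Finset.mem_insert.mp hmem with rfl | h
            · exact hbU'' (hIU hj)
            · exact hIA' j hj h
      · -- R ∩ A ⊆ U''
        have hsub : R ∩ A ⊆ U'' := by
          intro a ha
          by_contra h
          exact hcase ⟨a, Finset.mem_sdiff.mpr ⟨ha, h⟩⟩
        refine ⟨A'', U'', fun a ha => (Finset.mem_sdiff.mp (hA''sub ha)).1, ?_, hU''card, hcert⟩
        intro a ha
        by_cases haR : a ∈ R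
        · exact hsub (Finset.mem_inter.mpr ⟨haR, ha⟩)
        · exact hBsub (Finset.mem_sdiff.mpr ⟨ha, haR⟩)

/-- For a linear code with locality `r`, any subset `A` of coordinates contains a
subset `A'` of size at least `⌈|A|/(r+1)⌉` such that every `i ∈ A'` has a recovering
set disjoint from `A'`. -/
theorem stmt_12 (F : Type*) [Field F] (n r : ℕ) (hr : 0 < r)
    (C : Submodule F (Fin n → F))
    (hloc : ∀ i : Fin n, ∃ I : Finset (Fin n), i ∉ I ∧ I.card ≤ r ∧
      ∀ c ∈ C, ∀ c' ∈ C, (∀ j ∈ I, c j = c' j) → c i = c' i) :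
    ∀ A : Finset (Fin n), ∃ A' ⊆ A, (A.card + r) / (r + 1) ≤ A'.card ∧
      ∀ i ∈ A', ∃ I : Finset (Fin n), i ∉ I ∧ I.card ≤ r ∧
        (∀ c ∈ C, ∀ c' ∈ C, (∀ j ∈ I, c j = c' j) → c i = c' i) ∧
        ∀ j ∈ I, j ∉ A' := by
  intro A
  have hR : ∀ i : Fin n, ∃ R : Finset (Fin n), i ∈ R ∧ R.card ≤ r + 1 ∧
      ∀ j ∈ R, RecSet C (R.erase j) j := by
    intro i
    apply exists_circuit C i
    obtain ⟨I, hiI, hIcard, hIrec⟩ := hloc i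
    refine ⟨I, hiI, hIcard, ?_⟩
    intro c hc hcvan
    have := hIrec c hc 0 C.zero_mem (fun j hj => by simpa using hcvan j hj)
    simpa using this
  obtain ⟨A', U, hA'A, hAU, hUcard, hcert⟩ := key_lemma C hR A
  refine ⟨A', hA'A, ?_, ?_⟩
  · have h1 : A.card ≤ U.card := Finset.card_le_card hAU
    have h2 : A.card ≤ (r + 1) * A'.card := le_trans h1 hUcard
    calc (A.card + r) / (r + 1) ≤ ((r + 1) * A'.card + r) / (r + 1) :=
          Nat.div_le_div_right (by omega)
      _ = A'.card := by
          rw [Nat.mul_add_div (by omega), Nat.div_eq_of_lt (by omega), add_zero]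
  · intro i hi
    obtain ⟨I, hIU, hiI, hIcard, hIrec, hIA'⟩ := hcert i hi
    refine ⟨I, hiI, hIcard, ?_, hIA'⟩
    intro c hc c' hc' hagree
    have hd : c - c' ∈ C := C.sub_mem hc hc'
    have := hIrec (c - c') hd (fun j hj => by simp [hagree j hj])
    simpa [sub_eq_zero] using this
end

section
/- Let $r \geq 1$, $k \geq 1$, let $A_1, \ldots, A_k$ be pairwise disjoint $(r+1)$-subsets of $\mathbb{F}_q$ whose union is $A$ with $|A| = k(r+1) = n$, let $g$ be a degree-$(r+1)$ polynomial constant on each $A_i$, and for a message $\mathbf{m} = (m_1, \ldots, m_{kr}) \in \mathbb{F}_q^{kr}$ define the encoding polynomial $f_{\mathbf{m}}(x) = \sum_{i=1}^{r}\sum_{j=0}^{k-1} m_{jr+i}\, g(x)^j x^{i-1}$. Then the code $\mathcal{C} = \{(f_{\mathbf{m}}(a))_{a \in A} : \mathbf{m} \in \mathbb{F}_q^{kr}\}$ has locality $r$: for each $a \in A_i$, the symbol $f_{\mathbf{m}}(a)$ is determined by the $r$ symbols $\{f_{\mathbf{m}}(a') : a' \in A_i \setminus \{a\}\}$ (via interpolation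 of the degree-$\le r-1$ polynomial $\sum_{i=1}^r (\sum_j m_{jr+i} g(A_i)^j) x^{i-1}$). -/
open Polynomial

theorem Polynomial.eval_eq_of_degree_lt_of_eval_eq_of_ne {R : Type*} [CommRing R] [IsDomain R]
    {n : ℕ} {v : Fin (n + 1) → R} (hv : Function.Injective v) {p q : R[X]}
    (hp : p.degree < n) (hq : q.degree < n) (j₀ : Fin (n + 1))
    (h : ∀ j, j ≠ j₀ → p.eval (v j) = q.eval (v j)) :
    p.eval (v j₀) = q.eval (v j₀) := by
  have hcard : (Finset.univ.erase j₀).card = n := by simp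
  have hpq : p = q :=
    eq_of_degrees_lt_of_eval_index_eq _ hv.injOn (by rwa [hcard]) (by rwa [hcard])
      fun j hj => h j (Finset.ne_of_mem_erase hj)
  rw [hpq]

namespace TamoBarg

variable {R : Type*} [CommSemiring R] {k r : ℕ}

/-- On the points where `g` takes the value `c`, the encoding polynomial `∑ₜ ∑ₛ m t s g(x)ᵗ xˢ`
agrees with this polynomial of degree `< r`. -/
noncomputable def localPolynomial (m : Fin k → Fin r → R) (c : R) : R[X] :=
  ∑ s : Fin r, C (∑ t : Fin k, m t s * c ^ (t : ℕ)) * X ^ (s : ℕ)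

theorem degree_localPolynomial_lt (m : Fin k → Fin r → R) (c : R) :
    (localPolynomial m c).degree < r :=
  degree_sum_fin_lt _

theorem eval_localPolynomial (m : Fin k → Fin r → R) (c x : R) :
    (localPolynomial m c).eval x = ∑ t : Fin k, ∑ s : Fin r, m t s * c ^ (t : ℕ) * x ^ (s : ℕ) := by
  simp only [localPolynomial, eval_finsetSum, eval_mul, eval_C, eval_pow, eval_X,
    Finset.sum_mul]
  exact Finset.sum_comm

end TamoBarg

open TamoBarg in
theorem stmt_16_general (F : Type*) [Field F] (k r : ℕ)
    (a : Fin k → Fin (r + 1) → F)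
    (hdist : Function.Injective fun p : Fin k × Fin (r + 1) => a p.1 p.2)
    (g : Polynomial F)
    (gv : Fin k → F) (hconst : ∀ i j, g.eval (a i j) = gv i) :
    ∀ (i₀ : Fin k) (j₀ : Fin (r + 1)) (m m' : Fin k → Fin r → F),
      (∀ j : Fin (r + 1), j ≠ j₀ →
        (∑ t : Fin k, ∑ s : Fin r,
            m t s * (g.eval (a i₀ j)) ^ (t : ℕ) * (a i₀ j) ^ (s : ℕ)) =
          ∑ t : Fin k, ∑ s : Fin r,
            m' t s * (g.eval (a i₀ j)) ^ (t : ℕ) * (a i₀ j) ^ (s : ℕ)) →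
      (∑ t : Fin k, ∑ s : Fin r,
          m t s * (g.eval (a i₀ j₀)) ^ (t : ℕ) * (a i₀ j₀) ^ (s : ℕ)) =
        ∑ t : Fin k, ∑ s : Fin r,
          m' t s * (g.eval (a i₀ j₀)) ^ (t : ℕ) * (a i₀ j₀) ^ (s : ℕ) := by
  intro i₀ j₀ m m' hloc
  have hinj : Function.Injective (a i₀) := fun j j' h =>
    congrArg Prod.snd (@hdist (i₀, j) (i₀, j') h)
  simp only [hconst, ← eval_localPolynomial] at hloc ⊢
  exact eval_eq_of_degree_lt_of_eval_eq_of_ne hinj (degree_localPolynomial_lt m _)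
    (degree_localPolynomial_lt m' _) j₀ hloc

/-- Tamo–Barg codes have locality `r`: with pairwise disjoint `(r+1)`-sets `Aᵢ`,
a degree-`(r+1)` polynomial `g` constant on each `Aᵢ`, and encoding polynomials
`f_m(x) = ∑_{t,s} m_{t,s} g(x)^t x^s` (`0 ≤ s ≤ r-1`, `0 ≤ t ≤ k-1`), each symbol
`f_m(a)` for `a ∈ Aᵢ` is determined by the symbols `{f_m(a') : a' ∈ Aᵢ ∖ {a}}`. -/
theorem stmt_16 (F : Type*) [Field F] [Fintype F] (k r : ℕ) (hk : 0 < k) (hr : 0 < r)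
    (a : Fin k → Fin (r + 1) → F)
    (hdist : Function.Injective fun p : Fin k × Fin (r + 1) => a p.1 p.2)
    (g : Polynomial F) (hdeg : g.natDegree = r + 1)
    (gv : Fin k → F) (hconst : ∀ i j, g.eval (a i j) = gv i) :
    ∀ (i₀ : Fin k) (j₀ : Fin (r + 1)) (m m' : Fin k → Fin r → F),
      (∀ j : Fin (r + 1), j ≠ j₀ →
        (∑ t : Fin k, ∑ s : Fin r,
            m t s * (g.eval (a i₀ j)) ^ (t : ℕ) * (a i₀ j) ^ (s : ℕ)) =
          ∑ t : Fin k, ∑ s : Fin r,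
            m' t s * (g.eval (a i₀ j)) ^ (t : ℕ) * (a i₀ j) ^ (s : ℕ)) →
      (∑ t : Fin k, ∑ s : Fin r,
          m t s * (g.eval (a i₀ j₀)) ^ (t : ℕ) * (a i₀ j₀) ^ (s : ℕ)) =
        ∑ t : Fin k, ∑ s : Fin r,
          m' t s * (g.eval (a i₀ j₀)) ^ (t : ℕ) * (a i₀ j₀) ^ (s : ℕ) :=
  stmt_16_general F k r a hdist g gv hconst
end

section
/- Let $(\mathcal{C}^I, \mathcal{C}^F)$ be an $(n^I, k; n^F, \zeta k)$ MDS convertible code over $\mathbb{F}_q$ (not necessarily linear) with conversion procedure $T$, where $\mathcal{C}^I$ is an $(n^I, k)$ MDS code and $\mathcal{C}^F$ is an $(n^F, \zeta k)$ MDS code, $\zeta \geq 2$. If $n^I - k < n^F - \zeta k$, then the read access cost of any conversion procedure is at least $\zeta k$, i.e., for each $i \in [\zeta]$ the number of symbols accessed from the $i$-th initial codeword is at least $k$. -/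
/-!
Suppose fewer than `k` symbols are read from the `i`-th initial codeword. Enlarge the accessed
set to a set `S` of `min (k - 1) nI` coordinates. Since there are more messages than patterns
on `S`, two distinct messages `x ≠ x'` have initial codewords agreeing on `S`. Put `x` in
every block, then replace block `i` by `x'`. A final symbol computed from the accessed symbols
cannot tell the two apart, and neither can a symbol inherited from another block or from a
coordinate of `S`. The two final codewords therefore differ only at the images of `Sᶜ`, at
most `nI - min (k - 1) nI < nF - ζ k + 1` places, which the final MDS distance forbids.
-/

open Finset Function

theorem Fintype.exists_ne_eqOn_of_card_lt {κ α F : Type*} [Fintype κ] [DecidableEq κ]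
    [DecidableEq α] [Fintype F]
    (hF : 1 < Fintype.card F) (E : (κ → F) → α → F) (S : Finset α)
    (hS : S.card < Fintype.card κ) :
    ∃ x x', x ≠ x' ∧ ∀ u ∈ S, E x u = E x' u := by
  obtain ⟨x, x', hne, heq⟩ :=
    Fintype.exists_ne_map_eq_of_card_lt (fun x (u : S) => E x u) (by
      simp only [Fintype.card_fun, Fintype.card_coe]
      exact Nat.pow_lt_pow_right hF hS)
  exact ⟨x, x', hne, fun u hu => congrFun heq ⟨u, hu⟩⟩

section MergeConversion

variable {F M α β γ : Type*} [Fintype α] [DecidableEq α] [DecidableEq β] [DecidableEq γ]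
  {EI : M → α → F} {EF : (β → M) → γ → F} {U Acc : β → Finset α}
  {τ : β → α → γ}

theorem eq_update_of_eqOn_accessed
    (hU : ∀ i, ∀ u ∈ U i, ∀ m, EF m (τ i u) = EI (m i) u)
    (hconv : ∀ j, (∃ i, ∃ u ∈ U i, τ i u = j) ∨
      ∀ m m', (∀ i, ∀ u ∈ Acc i, EI (m i) u = EI (m' i) u) → EF m j = EF m' j)
    {m : β → M} {i : β} {x : M} {S : Finset α} (hAS : Acc i ⊆ S)
    (hS : ∀ u ∈ S, EI (m i) u = EI x u) {j : γ} (hj : j ∉ Sᶜ.image (τ i)) :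
    EF m j = EF (update m i x) j := by
  have hblock : ∀ i', ∀ u, i' ≠ i ∨ u ∈ S → EI (m i') u = EI (update m i x i') u := by
    rintro i' u (hi' | huS)
    · rw [update_of_ne hi']
    · rcases eq_or_ne i' i with rfl | hi'
      · rw [update_self, hS u huS]
      · rw [update_of_ne hi']
  rcases hconv j with ⟨i', u, hu, rfl⟩ | hfun
  · rw [hU i' u hu, hU i' u hu]
    refine hblock i' u ?_
    by_contra! h
    obtain ⟨rfl, huS⟩ := h
    exact hj (mem_image_of_mem _ (mem_compl.mpr huS))
  · refine hfun _ _ fun i' u hu => hblock i' u ?_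
    rcases eq_or_ne i' i with rfl | hi'
    · exact .inr (hAS hu)
    · exact .inl hi'

theorem hammingDist_update_le_card_compl [DecidableEq F] [Fintype γ]
    (hU : ∀ i, ∀ u ∈ U i, ∀ m, EF m (τ i u) = EI (m i) u)
    (hconv : ∀ j, (∃ i, ∃ u ∈ U i, τ i u = j) ∨
      ∀ m m', (∀ i, ∀ u ∈ Acc i, EI (m i) u = EI (m' i) u) → EF m j = EF m' j)
    {m : β → M} {i : β} {x : M} {S : Finset α} (hAS : Acc i ⊆ S)
    (hS : ∀ u ∈ S, EI (m i) u = EI x u) :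
    hammingDist (EF m) (EF (update m i x)) ≤ Sᶜ.card :=
  calc hammingDist (EF m) (EF (update m i x))
      = (univ.filter fun j => EF m j ≠ EF (update m i x) j).card := rfl
    _ ≤ (Sᶜ.image (τ i)).card := card_le_card fun j hj => by
        by_contra hj'
        exact (mem_filter.mp hj).2 (eq_update_of_eqOn_accessed hU hconv hAS hS hj')
    _ ≤ Sᶜ.card := card_image_le

end MergeConversion

theorem stmt_19_general (F : Type*) [Fintype F] [DecidableEq F] (hq : 1 < Fintype.card F)
    (ζ k nI nF : ℕ) (hlt : nI - k < nF - ζ * k)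
    (EI : (Fin k → F) → (Fin nI → F))
    (EF : (Fin ζ → Fin k → F) → (Fin nF → F))
    (hMDSF : ∀ m m' : Fin ζ → Fin k → F, m ≠ m' →
      nF - ζ * k + 1 ≤ hammingDist (EF m) (EF m'))
    (U : Fin ζ → Finset (Fin nI)) (τ : Fin ζ → Fin nI → Fin nF)
    (hU : ∀ i, ∀ u ∈ U i, ∀ m : Fin ζ → Fin k → F, EF m (τ i u) = EI (m i) u)
    (Acc : Fin ζ → Finset (Fin nI))
    (hconv : ∀ j : Fin nF,
      (∃ i, ∃ u ∈ U i, τ i u = j) ∨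
      (∀ m m' : Fin ζ → Fin k → F,
        (∀ i : Fin ζ, ∀ u ∈ Acc i, EI (m i) u = EI (m' i) u) → EF m j = EF m' j)) :
    ∀ i : Fin ζ, k ≤ (Acc i).card := by
  intro i
  by_contra! hAcc
  have hAcc_le : (Acc i).card ≤ nI := by simpa using card_le_univ (Acc i)
  obtain ⟨S, hAS, -, hScard⟩ := exists_subsuperset_card_eq (subset_univ (Acc i))
    (n := min (k - 1) nI) (by omega) (by simp)
  obtain ⟨x, x', hne, hxx'⟩ :=
    Fintype.exists_ne_eqOn_of_card_lt hq EI S (by rw [Fintype.card_fin]; omega)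
  let m : Fin ζ → Fin k → F := fun _ => x
  have hm : m ≠ update m i x' := fun h => hne (by simpa [m] using congrFun h i)
  have hfar := hMDSF _ _ hm
  have hclose := hammingDist_update_le_card_compl hU hconv hAS hxx' (m := m)
  rw [card_compl, Fintype.card_fin, hScard] at hclose
  omega

/-- Read-access lower bound for MDS convertible codes in the merge regime:
if `n^I - k < n^F - ζk`, then any conversion procedure must read at least `k`
symbols from each initial codeword (so the read access cost is at least `ζk`).

`EI`/`EF` are the encoders of the initial `(nI, k)` MDS code and of the final
`(nF, ζk)` MDS code (MDS expressed via the Singleton distance). For each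
`i < ζ`, `U i` are the coordinates of remaining symbols of the `i`-th initial
codeword, placed in the final codeword by the injection `τ i`, and `Acc i` are
the coordinates accessed (read) from the `i`-th initial codeword. Every final
symbol is either inherited from some remaining symbol or is a function of the
accessed symbols only. -/
theorem stmt_19 (F : Type*) [Fintype F] [DecidableEq F] (hq : 1 < Fintype.card F)
    (ζ k nI nF : ℕ) (hζ : 2 ≤ ζ) (hk : 0 < k)
    (hkI : k ≤ nI) (hkF : ζ * k ≤ nF) (hlt : nI - k < nF - ζ * k)
    (EI : (Fin k → F) → (Fin nI → F))
    (hMDSI : ∀ m m' : Fin k → F, m ≠ m' → nI - k + 1 ≤ hammingDist (EI m) (EI m'))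
    (EF : (Fin ζ → Fin k → F) → (Fin nF → F))
    (hMDSF : ∀ m m' : Fin ζ → Fin k → F, m ≠ m' →
      nF - ζ * k + 1 ≤ hammingDist (EF m) (EF m'))
    (U : Fin ζ → Finset (Fin nI)) (τ : Fin ζ → Fin nI → Fin nF)
    (hτinj : ∀ i, Set.InjOn (τ i) (U i))
    (hU : ∀ i, ∀ u ∈ U i, ∀ m : Fin ζ → Fin k → F, EF m (τ i u) = EI (m i) u)
    (Acc : Fin ζ → Finset (Fin nI))
    (hconv : ∀ j : Fin nF,
      (∃ i, ∃ u ∈ U i, τ i u = j) ∨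
      (∀ m m' : Fin ζ → Fin k → F,
        (∀ i : Fin ζ, ∀ u ∈ Acc i, EI (m i) u = EI (m' i) u) → EF m j = EF m' j)) :
    ∀ i : Fin ζ, k ≤ (Acc i).card :=
  stmt_19_general F hq ζ k nI nF hlt EI EF hMDSF U τ hU Acc hconv
end
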